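/- arXiv:1212.2660 — 7 statements merged into one kernel-verified Lean document; each statement's English description precedes it below -/
import Mathlib

section
/- Every bounded infinite countable abelian group is not cohopfian, i.e., it is isomorphic to some proper subgroup of itself. -/
/-!
A bounded abelian group is the direct sum of its finitely many primary components, so one of
them is infinite; and a direct summand that is not cohopfian makes the whole group non-cohopfian.
An infinite bounded `p`-group is a direct sum of cyclic groups `ZMod (p ^ e)` with `e` bounded
(Prüfer), so some `ZMod (p ^ e)` occurs over an infinite index set `T`. As `Option T ≃ T`, that
summand `M` satisfies `M ≃+ ZMod (p ^ e) × M`, and `x ↦ (0, x)` is injective, not surjective.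

Prüfer's theorem goes by induction on the exponent. If `p • G ≃+ ⨁ i, ZMod (p ^ eᵢ)` with all
`eᵢ ≥ 1`, choose `xᵢ` with `p • xᵢ` the `i`-th generator. The map `σ` from
`A = ⨁ i, ZMod (p ^ (eᵢ + 1))` sending the generators to the `xᵢ` is injective on `p • A`, and
`A[p] ⊆ p • A`, so `σ` is injective; its image and `G[p]` span `G`. So a complement of
`range σ ⊓ G[p]` in the `ZMod p`-vector space `G[p]` is a complement of `range σ` in `G`, and it
is a direct sum of copies of `ZMod p`.
-/

open DirectSum Function

universe u

/-- Equivalently, `G` is not isomorphic to a proper subgroup of itself. -/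
def IsCohopfian (G : Type*) [AddGroup G] : Prop :=
  ∀ f : G →+ G, Injective f → Surjective f

namespace IsCohopfian

variable {G H : Type*} [AddGroup G] [AddGroup H]

theorem of_addEquiv (e : G ≃+ H) (h : IsCohopfian H) : IsCohopfian G := fun f hf => by
  let g : H →+ H := (e.toAddMonoidHom.comp f).comp e.symm.toAddMonoidHom
  have hg : Surjective g := h g (e.injective.comp (hf.comp e.symm.injective))
  have hfg : ⇑f = e.symm ∘ g ∘ e := by ext; simp [g]
  rw [hfg]
  exact e.symm.surjective.comp (hg.comp e.surjective)

theorem of_prod_left (h : IsCohopfian (G × H)) : IsCohopfian G := fun f hf x => by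
  obtain ⟨y, hy⟩ := h (f.prodMap (AddMonoidHom.id H)) (hf.prodMap injective_id) (x, 0)
  exact ⟨y.1, congrArg Prod.fst hy⟩

theorem of_prod_right (h : IsCohopfian (G × H)) : IsCohopfian H :=
  (h.of_addEquiv AddEquiv.prodComm).of_prod_left

theorem of_directSum {ι : Type*} [DecidableEq ι] {β : ι → Type*} [∀ i, AddCommGroup (β i)]
    (h : IsCohopfian (⨁ i, β i)) (j : ι) : IsCohopfian (β j) := fun f hf => by
  let F := update (fun i => AddMonoidHom.id (β i)) j f
  have hF : ∀ i, Injective (F i) := fun i => by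
    rcases eq_or_ne i j with rfl | hij
    · simpa [F] using hf
    · simpa [F, update_of_ne hij] using injective_id
  simpa [F] using (map_surjective F).1 (h _ ((map_injective F).2 hF)) j

end IsCohopfian

theorem exists_ne_top_addEquiv_of_not_isCohopfian {G : Type*} [AddGroup G]
    (h : ¬IsCohopfian G) : ∃ K : AddSubgroup G, K ≠ ⊤ ∧ Nonempty (G ≃+ K) := by
  simp only [IsCohopfian, not_forall] at h
  obtain ⟨f, hf, hs⟩ := h
  exact ⟨f.range, fun h => hs (AddMonoidHom.range_eq_top.1 h), ⟨AddMonoidHom.ofInjective hf⟩⟩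

theorem not_isCohopfian_of_addEquiv_prod {G C : Type*} [AddGroup G] [AddGroup C] [Nontrivial C]
    (e : G ≃+ C × G) : ¬IsCohopfian G := fun h => by
  obtain ⟨c, hc⟩ := exists_ne (0 : C)
  obtain ⟨g, hg⟩ := h (e.symm.toAddMonoidHom.comp (AddMonoidHom.inr C G))
    (e.symm.injective.comp (Prod.mk_right_injective 0)) (e.symm (c, 0))
  exact hc (congrArg Prod.fst (e.symm.injective hg)).symm

theorem not_isCohopfian_directSum_const (ι M : Type*) [Infinite ι] [AddCommGroup M]
    [Nontrivial M] : ¬IsCohopfian (⨁ _ : ι, M) := by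
  classical
  obtain ⟨τ⟩ : Nonempty (Option ι ≃ ι) := Cardinal.eq.1 <| by
    rw [Cardinal.mk_option, Cardinal.add_one_eq (Cardinal.aleph0_le_mk ι)]
  exact not_isCohopfian_of_addEquiv_prod
    ((equivCongrLeft τ.symm).trans (addEquivProdDirectSum (α := fun _ => M)))

theorem not_isCohopfian_directSum_zmod {ι : Type*} [Infinite ι] (n : ι → ℕ) (N : ℕ)
    (hn : ∀ i, 1 < n i ∧ n i ≤ N) : ¬IsCohopfian (⨁ i, ZMod (n i)) := by
  classical
  -- `ULift` because `sigmaFiberAddEquiv` needs the base of the fibration in the universe of `ι`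
  let f : ι → ULift (Fin (N + 1)) := fun i => ⟨n i, Nat.lt_succ_of_le (hn i).2⟩
  obtain ⟨v, hv⟩ := Finite.exists_infinite_fiber f
  have hfib : ∀ i : {i // f i = v}, n i = v.down := fun i => congrArg (Fin.val ∘ ULift.down) i.2
  obtain ⟨i₀⟩ := hv.nonempty
  have : Fact (1 < (v.down : ℕ)) := ⟨hfib i₀ ▸ (hn i₀).1⟩
  have : Infinite {i // f i = v} := hv
  intro h
  have hfiber : IsCohopfian (⨁ i : {i // f i = v}, ZMod (n i)) :=
    (h.of_addEquiv (sigmaFiberAddEquiv (β := fun i => ZMod (n i)) f).symm).of_directSum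
      (β := fun j => ⨁ i : {i // f i = j}, ZMod (n i)) v
  exact not_isCohopfian_directSum_const {i // f i = v} (ZMod v.down) <| hfiber.of_addEquiv
    (DFinsupp.mapRange.addEquiv fun i => (ZMod.ringEquivCongr (hfib i)).toAddEquiv).symm

theorem ZMod.addMonoidHom_ext {n : ℕ} {A : Type*} [AddGroup A] {f g : ZMod n →+ A}
    (h : f 1 = g 1) : f = g := by
  ext z
  obtain ⟨m, rfl⟩ := ZMod.intCast_surjective z
  rw [← zsmul_one, map_zsmul, map_zsmul, h]

theorem ZMod.nsmul_eq_zero_of_castHom_eq_zero {p e : ℕ} {x : ZMod (p ^ (e + 1))}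
    (hx : ZMod.castHom (pow_dvd_pow p e.le_succ) (ZMod (p ^ e)) x = 0) : p • x = 0 := by
  obtain ⟨m, rfl⟩ := ZMod.intCast_surjective x
  rw [map_intCast, ZMod.intCast_zmod_eq_zero_iff_dvd] at hx
  rw [nsmul_eq_mul, ← Int.cast_natCast, ← Int.cast_mul, ZMod.intCast_zmod_eq_zero_iff_dvd,
    pow_succ', Nat.cast_mul]
  exact mul_dvd_mul_left _ hx

theorem ZMod.exists_nsmul_eq_of_nsmul_eq_zero {p e : ℕ} (hp : 0 < p) (he : 0 < e)
    {x : ZMod (p ^ (e + 1))} (hx : p • x = 0) : ∃ y, p • y = x := by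
  obtain ⟨m, rfl⟩ := ZMod.intCast_surjective x
  rw [nsmul_eq_mul, ← Int.cast_natCast, ← Int.cast_mul, ZMod.intCast_zmod_eq_zero_iff_dvd,
    pow_succ', Nat.cast_mul] at hx
  obtain ⟨t, rfl⟩ := (dvd_pow_self (p : ℤ) he.ne').trans
    (Int.dvd_of_mul_dvd_mul_left (by exact_mod_cast hp.ne') hx)
  exact ⟨t, by push_cast [nsmul_eq_mul]; ring⟩

namespace DirectSum

def sumAddEquivProd {ι κ : Type*} [DecidableEq ι] [DecidableEq κ]
    (β : ι ⊕ κ → Type*) [∀ s, AddCommMonoid (β s)] :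
    (⨁ s, β s) ≃+ (⨁ i, β (.inl i)) × ⨁ j, β (.inr j) :=
  AddMonoidHom.toAddEquiv
    (toAddMonoid fun s => match s with
      | .inl i => (AddMonoidHom.inl _ _).comp (of (fun i => β (.inl i)) i)
      | .inr j => (AddMonoidHom.inr _ _).comp (of (fun j => β (.inr j)) j))
    ((toAddMonoid fun i => of β (.inl i)).coprod (toAddMonoid fun j => of β (.inr j)))
    (by ext (i | j) x <;> simp)
    ((AddMonoidHom.coprod_unique _).symm.trans <|
      (congrArg₂ _ (by ext i x <;> simp) (by ext j x <;> simp)).trans AddMonoidHom.coprod_inl_inr)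

theorem exists_nsmul_eq {ι : Type*} {β : ι → Type*} [∀ i, AddCommGroup (β i)] (n : ℕ)
    {x : ⨁ i, β i} (hx : ∀ i, ∃ y, n • y = x i) : ∃ y, n • y = x := by
  have hmap : ∀ y : ⨁ i, β i, map (fun i => nsmulAddMonoidHom n) y = n • y := fun y => by
    ext i
    exact (DFinsupp.nsmul_apply n y i).symm
  have hx' : x ∈ (map fun i => nsmulAddMonoidHom (α := β i) n).range := by
    rw [range_map, AddSubgroup.mem_comap, AddSubgroup.mem_pi]
    exact fun i _ => by simpa using hx i
  obtain ⟨y, hy⟩ := hx'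
  exact ⟨y, (hmap y).symm.trans hy⟩

noncomputable def castPowSucc {ι : Type*} (p : ℕ) (e : ι → ℕ) :
    (⨁ i, ZMod (p ^ (e i + 1))) →+ ⨁ i, ZMod (p ^ e i) :=
  map fun i => (ZMod.castHom (pow_dvd_pow p (e i).le_succ) _).toAddMonoidHom

end DirectSum

theorem AddMonoidHom.injective_of_nsmul {A G : Type*} [AddCommGroup A] [AddCommGroup G]
    (σ : A →+ G) (n : ℕ) (h₁ : ∀ a, σ (n • a) = 0 → n • a = 0)
    (h₂ : ∀ a : A, n • a = 0 → ∃ b, n • b = a) : Injective σ := by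
  refine (injective_iff_map_eq_zero σ).2 fun a ha => ?_
  obtain ⟨b, rfl⟩ := h₂ a (h₁ a (by rw [map_nsmul, ha, nsmul_zero]))
  exact h₁ b ha

namespace AddSubgroup

noncomputable def addEquivProdOfIsCompl {G : Type*} [AddCommGroup G] {H K : AddSubgroup G}
    (h : IsCompl H K) : G ≃+ H × K :=
  (Submodule.prodEquivOfIsCompl _ _ (toIntSubmodule.isCompl_iff.1 h)).toAddEquiv.symm

theorem isCompl_torsionBy_of_coprime {G : Type*} [AddCommGroup G] {a b : ℕ}
    (hab : a.Coprime b) (hG : ∀ g : G, (a * b) • g = 0) :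
    IsCompl (torsionBy G a) (torsionBy G b) := by
  obtain ⟨u, v, huv⟩ := Nat.isCoprime_iff_coprime.2 hab
  have hG' : ∀ g : G, ((a : ℤ) * b) • g = 0 := fun g => by exact_mod_cast hG g
  constructor
  · rw [disjoint_def]
    intro g ha hb
    rw [torsionBy.nsmul_iff] at ha hb
    calc g = (u * a + v * b) • g := by rw [huv, one_zsmul]
      _ = 0 := by rw [add_smul, mul_smul, mul_smul, natCast_zsmul, natCast_zsmul, ha, hb,
        smul_zero, smul_zero, add_zero]
  · rw [codisjoint_iff, eq_top_iff]
    rintro g -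
    refine mem_sup.2
      ⟨(v * b) • g, ?_, (u * a) • g, ?_, by rw [← add_zsmul, add_comm, huv, one_zsmul]⟩
    · rw [torsionBy.nsmul_iff, ← natCast_zsmul, smul_smul,
        show (a : ℤ) * (v * b) = v * (a * b) by ring, mul_smul, hG', smul_zero]
    · rw [torsionBy.nsmul_iff, ← natCast_zsmul, smul_smul,
        show (b : ℤ) * (u * a) = u * (a * b) by ring, mul_smul, hG', smul_zero]

theorem exists_isCompl_addEquiv_directSum_zmod (p : ℕ) [Fact p.Prime] {V : Type u}
    [AddCommGroup V] [Module (ZMod p) V] (S : AddSubgroup V) :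
    ∃ W : AddSubgroup V, IsCompl S W ∧ ∃ B : Type u, Nonempty (W ≃+ ⨁ _ : B, ZMod p) := by
  classical
  obtain ⟨W, hW⟩ := (toZModSubmodule p S).exists_isCompl
  refine ⟨W.toAddSubgroup, (toZModSubmodule p).isCompl_iff.2 (by simpa using hW),
    Module.Basis.ofVectorSpaceIndex (ZMod p) W, ⟨?_⟩⟩
  exact (Module.Basis.ofVectorSpace (ZMod p) W).repr.toAddEquiv.trans
    (finsuppLEquivDirectSum (ZMod p) (ZMod p) _).toAddEquiv

theorem exists_isCompl_of_sup_torsionBy_eq_top (p : ℕ) [Fact p.Prime] {G : Type u}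
    [AddCommGroup G] (H : AddSubgroup G) (hH : H ⊔ torsionBy G p = ⊤) :
    ∃ W : AddSubgroup G, IsCompl H W ∧ ∃ B : Type u, Nonempty (W ≃+ ⨁ _ : B, ZMod p) := by
  let _ := torsionBy.zmodModule (A := G) (n := p)
  obtain ⟨W, hW, B, ⟨ψ⟩⟩ :=
    exists_isCompl_addEquiv_directSum_zmod p (H.addSubgroupOf (torsionBy G p))
  refine ⟨W.map (torsionBy G p).subtype, ⟨?_, ?_⟩, B,
    ⟨(equivMapOfInjective W _ (torsionBy G p).subtype_injective).symm.trans ψ⟩⟩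
  · rw [disjoint_def]
    rintro _ hH ⟨w, hw, rfl⟩
    have : w ∈ H.addSubgroupOf (torsionBy G p) ⊓ W := ⟨hH, hw⟩
    rw [hW.inf_eq_bot, mem_bot] at this
    simp [this]
  · rw [codisjoint_iff, eq_top_iff]
    rintro g -
    obtain ⟨h, hh, t, ht, rfl⟩ := mem_sup.1 (hH ▸ mem_top g : g ∈ H ⊔ torsionBy G p)
    obtain ⟨s, hs, w, hw, hsw⟩ :=
      mem_sup.1 (hW.sup_eq_top ▸ mem_top _ : (⟨t, ht⟩ : torsionBy G p) ∈ _ ⊔ W)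
    refine mem_sup.2 ⟨h + s, H.add_mem hh hs, w, ⟨w, hw, rfl⟩, ?_⟩
    rw [add_assoc, ← (torsionBy G p).coe_add, hsw]

end AddSubgroup

theorem exists_lift_of_addEquiv_range_nsmul {p : ℕ} {G ι : Type*} [AddCommGroup G]
    {e : ι → ℕ} (φ : (nsmulAddMonoidHom p : G →+ G).range ≃+ ⨁ i, ZMod (p ^ e i)) :
    ∃ σ : (⨁ i, ZMod (p ^ (e i + 1))) →+ G, ∀ a, σ (p • a) = φ.symm (castPowSucc p e a) := by
  classical
  choose x hx using fun i => (φ.symm (of _ i 1)).2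
  replace hx : ∀ i, p • x i = φ.symm (of _ i 1) := hx
  have hxo : ∀ i, ((p ^ (e i + 1) : ℕ) : ℤ) • x i = 0 := fun i => by
    rw [natCast_zsmul, pow_succ, ← smul_smul, hx, ← AddSubgroup.coe_nsmul, ← map_nsmul,
      ← map_nsmul, nsmul_eq_mul, mul_one, ZMod.natCast_self]
    simp
  let σ : (⨁ i, ZMod (p ^ (e i + 1))) →+ G :=
    toAddMonoid fun i => ZMod.lift _ ⟨zmultiplesHom G (x i), hxo i⟩
  refine ⟨σ, fun a => DFunLike.congr_fun (?_ : σ.comp (nsmulAddMonoidHom p) =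
    (AddSubgroup.subtype _).comp (φ.symm.toAddMonoidHom.comp (castPowSucc p e))) a⟩
  refine addHom_ext' fun i => ZMod.addMonoidHom_ext ?_
  have hσ : σ (of _ i 1) = x i := by
    simpa [σ] using ZMod.lift_coe _ ⟨zmultiplesHom G (x i), hxo i⟩ 1
  have hπ : castPowSucc p e (of _ i 1) = of _ i 1 := by
    simp only [castPowSucc, map_of, RingHom.toAddMonoidHom_eq_coe, AddMonoidHom.coe_coe, map_one]
  simp [hσ, hπ, hx]

theorem exists_addEquiv_directSum_zmod_of_addEquiv_range_nsmul {p : ℕ} [hp : Fact p.Prime]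
    {G : Type u} [AddCommGroup G] {ι : Type u} {e : ι → ℕ} (he : ∀ i, 0 < e i)
    (φ : (nsmulAddMonoidHom p : G →+ G).range ≃+ ⨁ i, ZMod (p ^ e i)) :
    ∃ B : Type u, Nonempty (G ≃+
      ⨁ s : ι ⊕ B, ZMod (p ^ Sum.elim (fun i => e i + 1) (fun _ => 1) s)) := by
  classical
  obtain ⟨σ, hσ⟩ := exists_lift_of_addEquiv_range_nsmul φ
  have hinj : Injective σ := by
    refine σ.injective_of_nsmul p (fun a ha => ?_) (fun a ha => ?_)
    · rw [hσ, ZeroMemClass.coe_eq_zero, AddEquiv.map_eq_zero_iff] at ha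
      ext i
      exact ZMod.nsmul_eq_zero_of_castHom_eq_zero (by simpa [castPowSucc] using congrArg (· i) ha)
    · exact exists_nsmul_eq p fun i => ZMod.exists_nsmul_eq_of_nsmul_eq_zero hp.out.pos (he i)
        (by rw [← DFinsupp.nsmul_apply, ha, DirectSum.zero_apply])
  have hsup : σ.range ⊔ AddSubgroup.torsionBy G p = ⊤ := by
    rw [eq_top_iff]
    rintro g -
    obtain ⟨a, ha⟩ : ∃ a, castPowSucc p e a = φ ⟨p • g, g, rfl⟩ :=
      (map_surjective _).2 (fun i => ZMod.castHom_surjective (pow_dvd_pow p (e i).le_succ)) _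
    have : p • (g - σ a) = 0 := by
      rw [smul_sub, ← map_nsmul, hσ, ha, AddEquiv.symm_apply_apply, sub_self]
    exact AddSubgroup.mem_sup.2 ⟨σ a, ⟨a, rfl⟩, g - σ a, AddSubgroup.torsionBy.nsmul_iff.2 this,
      add_sub_cancel _ _⟩
  obtain ⟨W, hW, B, ⟨ψ⟩⟩ := AddSubgroup.exists_isCompl_of_sup_torsionBy_eq_top p σ.range hsup
  exact ⟨B, ⟨(AddSubgroup.addEquivProdOfIsCompl hW).trans <|
    ((AddMonoidHom.ofInjective hinj).symm.prodCongr <| ψ.trans <| DFinsupp.mapRange.addEquiv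
      fun _ => (ZMod.ringEquivCongr (pow_one p).symm).toAddEquiv).trans
    (sumAddEquivProd fun s => ZMod (p ^ Sum.elim (fun i => e i + 1) (fun _ => 1) s)).symm⟩⟩

theorem exists_addEquiv_directSum_zmod_prime_pow (p : ℕ) [Fact p.Prime] (k : ℕ) (G : Type u)
    [AddCommGroup G] (hG : ∀ g : G, p ^ k • g = 0) :
    ∃ (ι : Type u) (e : ι → ℕ), (∀ i, 0 < e i ∧ e i ≤ k) ∧
      Nonempty (G ≃+ ⨁ i, ZMod (p ^ e i)) := by
  induction k generalizing G with
  | zero =>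
    have : Unique G := ⟨⟨0⟩, fun g => by simpa using hG g⟩
    exact ⟨PEmpty, PEmpty.elim, PEmpty.rec, ⟨AddEquiv.ofUnique⟩⟩
  | succ k ih =>
    obtain ⟨ι, e, he, ⟨φ⟩⟩ := ih (nsmulAddMonoidHom p : G →+ G).range fun ⟨_, g, hg⟩ =>
      Subtype.ext (by simp [← hg, smul_smul, ← pow_succ, hG])
    obtain ⟨B, ⟨ψ⟩⟩ := exists_addEquiv_directSum_zmod_of_addEquiv_range_nsmul (fun i => (he i).1) φ
    refine ⟨ι ⊕ B, _, ?_, ⟨ψ⟩⟩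
    rintro (i | b)
    · simpa using (he i).2
    · simp

theorem not_isCohopfian_of_nsmul_prime_pow_eq_zero (p k : ℕ) [hp : Fact p.Prime] (G : Type u)
    [AddCommGroup G] [Infinite G] (hG : ∀ g : G, p ^ k • g = 0) : ¬IsCohopfian G := by
  obtain ⟨ι, e, he, ⟨φ⟩⟩ := exists_addEquiv_directSum_zmod_prime_pow p k G hG
  have : Infinite ι := by
    by_contra hι
    rw [not_infinite_iff_finite] at hι
    have := Fintype.ofFinite ι
    have : ∀ i, NeZero (p ^ e i) := fun i => ⟨pow_ne_zero _ hp.out.ne_zero⟩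
    have := Finite.of_equiv _ (φ.trans (DirectSum.addEquivProd _)).toEquiv.symm
    exact not_finite G
  exact fun h => not_isCohopfian_directSum_zmod (fun i => p ^ e i) (p ^ k)
    (fun i => ⟨Nat.one_lt_pow (he i).1.ne' hp.out.one_lt, Nat.pow_le_pow_right hp.out.pos (he i).2⟩)
    (h.of_addEquiv φ.symm)

theorem not_isCohopfian_of_nsmul_eq_zero {n : ℕ} (hn : n ≠ 0) (G : Type u) [AddCommGroup G]
    [Infinite G] (hG : ∀ g : G, n • g = 0) : ¬IsCohopfian G := by
  induction n using Nat.recOnPrimeCoprime generalizing G with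
  | zero => exact absurd rfl hn
  | prime_pow p k hp =>
    have := Fact.mk hp
    exact not_isCohopfian_of_nsmul_prime_pow_eq_zero p k G hG
  | coprime a b ha hb hab iha ihb =>
    let e := AddSubgroup.addEquivProdOfIsCompl (AddSubgroup.isCompl_torsionBy_of_coprime hab hG)
    by_cases hA : Infinite (AddSubgroup.torsionBy G a)
    · exact fun h => iha (by omega) _ (fun x => AddSubgroup.torsionBy.nsmul x)
        (h.of_addEquiv e.symm).of_prod_left
    · have : Infinite (AddSubgroup.torsionBy G b) := by
        by_contra hB
        rw [not_infinite_iff_finite] at hA hB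
        have := Finite.of_equiv _ e.symm.toEquiv
        exact not_finite G
      exact fun h => ihb (by omega) _ (fun x => AddSubgroup.torsionBy.nsmul x)
        (h.of_addEquiv e.symm).of_prod_right

theorem bounded_infinite_countable_abelian_not_cohopfian_general
    (G : Type*) [AddCommGroup G] [Infinite G]
    (hbounded : ∃ n : ℕ, 0 < n ∧ ∀ g : G, n • g = 0) :
    ∃ K : AddSubgroup G, K ≠ ⊤ ∧ Nonempty (G ≃+ K) := by
  obtain ⟨n, hn, hG⟩ := hbounded
  exact exists_ne_top_addEquiv_of_not_isCohopfian (not_isCohopfian_of_nsmul_eq_zero hn.ne' G hG)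

theorem bounded_infinite_countable_abelian_not_cohopfian
    (G : Type*) [AddCommGroup G] [Countable G] [Infinite G]
    (hbounded : ∃ n : ℕ, 0 < n ∧ ∀ g : G, n • g = 0) :
    ∃ K : AddSubgroup G, K ≠ ⊤ ∧ Nonempty (G ≃+ K) :=
  bounded_infinite_countable_abelian_not_cohopfian_general G hbounded
end

section
/- Chacon's combinatorial lemma: Let (x_{ji}) be a k×n matrix with entries in {0,1}, and let b₁,…,b_k be nonnegative reals with Σⱼ bⱼ = 1. Suppose H ⊆ {1,…,n} satisfies Σⱼ bⱼ x_{ji} ≥ 1−η for all i ∈ H, where 0 < η < 1. Then there exists γ with 1 ≤ γ ≤ k such that Σ_{i∈H} Σⱼ bⱼ x_{ji} x_{γi} ≥ |H|(1−2η). -/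
theorem chacon_combinatorial_lemma
    (k n : ℕ) (x : Fin k → Fin n → ℝ)
    (hx : ∀ j i, x j i = 0 ∨ x j i = 1)
    (b : Fin k → ℝ) (hb : ∀ j, 0 ≤ b j) (hb1 : ∑ j, b j = 1)
    (H : Finset (Fin n)) (η : ℝ) (hη0 : 0 < η) (hη1 : η < 1)
    (hH : ∀ i ∈ H, 1 - η ≤ ∑ j, b j * x j i) :
    ∃ γ : Fin k,
      (H.card : ℝ) * (1 - 2 * η) ≤ ∑ i ∈ H, ∑ j, b j * x j i * x γ i := by
  by_contra hcon
  push_neg at hcon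
  set C : ℝ := (H.card : ℝ) * (1 - 2 * η) with hC
  set T : Fin k → ℝ := fun γ => ∑ i ∈ H, ∑ j, b j * x j i * x γ i with hT
  have key : ∑ γ, b γ * T γ = ∑ i ∈ H, (∑ j, b j * x j i) ^ 2 := by
    simp_rw [hT, Finset.mul_sum]
    rw [Finset.sum_comm]
    refine Finset.sum_congr rfl fun i _ => ?_
    rw [sq, Finset.sum_mul_sum, Finset.sum_comm]
    exact Finset.sum_congr rfl fun γ _ => Finset.sum_congr rfl fun j _ => by ring
  have hlow : C ≤ ∑ i ∈ H, (∑ j, b j * x j i) ^ 2 := by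
    have h1 : ∀ i ∈ H, (1 - 2 * η) ≤ (∑ j, b j * x j i) ^ 2 := by
      intro i hi
      nlinarith [hH i hi]
    calc C = ∑ _i ∈ H, (1 - 2 * η) := by
            rw [Finset.sum_const, nsmul_eq_mul]
      _ ≤ _ := Finset.sum_le_sum h1
  have hpos : ∃ γ, 0 < b γ := by
    by_contra h
    push_neg at h
    have : ∑ j, b j ≤ 0 := Finset.sum_nonpos fun γ _ => h γ
    linarith
  obtain ⟨γ0, hγ0⟩ := hpos
  have hup : ∑ γ, b γ * T γ < ∑ γ, b γ * C := by
    refine Finset.sum_lt_sum (fun γ _ => ?_) ⟨γ0, Finset.mem_univ γ0, ?_⟩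
    · exact mul_le_mul_of_nonneg_left (le_of_lt (hcon γ)) (hb γ)
    · exact (mul_lt_mul_iff_right₀ hγ0).2 (hcon γ0)
  have : ∑ γ, b γ * C = C := by rw [← Finset.sum_mul, hb1, one_mul]
  linarith [key ▸ hup, hlow]
end

section
/- For bounded countable abelian groups, if H is a subgroup of G then m̄_H ≤ m̄_G pointwise, where m̄_G(pᵏ) = Σ_{n ≥ k} m_G(pⁿ). -/
/-!
The number `m̄_A(p ^ k)` is the `ZMod p`-dimension of `(p ^ (k - 1) A)[p]`, the `p`-torsion of
`p ^ (k - 1) A`. An injection `H → G` restricts to a `ZMod p`-linear injection of these spaces,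
so the dimension can only grow. For `A = ⨁ i, ZMod (q i)` with prime powers `q i`, the elements
`q i / p` of the summands with `q i = p ^ n`, `n ≥ k`, form a basis: they are independent because
they lie in distinct summands, and they span because `(p ^ (k - 1) ZMod q)[p]` is trivial unless
`q = p ^ n` with `n ≥ k`, in which case it is generated by `q / p`.
-/

open DirectSum Function

universe u

section Socle

variable (p m : ℕ) (A : Type u) [AddCommGroup A]

def socleOfMultiples : AddSubgroup A :=
  (nsmulAddMonoidHom p : A →+ A).ker ⊓ (nsmulAddMonoidHom (p ^ m) : A →+ A).range

variable {p m A}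

lemma mem_socleOfMultiples {x : A} :
    x ∈ socleOfMultiples p m A ↔ p • x = 0 ∧ ∃ y, p ^ m • y = x := by
  simp [socleOfMultiples]

instance : Module (ZMod p) (socleOfMultiples p m A) :=
  AddCommGroup.zmodModule fun x => Subtype.ext (mem_socleOfMultiples.1 x.2).1

lemma coe_zmod_smul_socleOfMultiples [NeZero p] (c : ZMod p) (x : socleOfMultiples p m A) :
    ((c • x : socleOfMultiples p m A) : A) = c.val • (x : A) := by
  rw [← ZMod.natCast_zmod_val c, Nat.cast_smul_eq_nsmul, ZMod.val_natCast_of_lt (ZMod.val_lt c)]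
  rfl

lemma map_mem_socleOfMultiples {B : Type*} [AddCommGroup B] (f : A →+ B) {x : A}
    (hx : x ∈ socleOfMultiples p m A) : f x ∈ socleOfMultiples p m B := by
  obtain ⟨hx, y, rfl⟩ := mem_socleOfMultiples.1 hx
  exact mem_socleOfMultiples.2 ⟨by rw [← map_nsmul, hx, map_zero], f y, (map_nsmul f _ _).symm⟩

lemma rank_socleOfMultiples_le_of_injective {B : Type u} [AddCommGroup B] (f : A →+ B)
    (hf : Injective f) :
    Module.rank (ZMod p) (socleOfMultiples p m A) ≤
      Module.rank (ZMod p) (socleOfMultiples p m B) := by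
  let g := (f.comp (socleOfMultiples p m A).subtype).codRestrict _ fun x =>
    map_mem_socleOfMultiples f x.2
  exact (g.toZModLinearMap p).rank_le_of_injective fun x y hxy =>
    Subtype.ext (hf congr(($hxy : B)))

end Socle

section ZMod

variable {p m q : ℕ}

lemma nsmul_natCast_div_eq_zero_iff (hpq : p ∣ q) (hq : q ≠ 0) {c : ℕ} :
    c • ((q / p : ℕ) : ZMod q) = 0 ↔ p ∣ c := by
  have hp : 0 < p := Nat.pos_of_dvd_of_pos hpq (Nat.pos_of_ne_zero hq)
  have hqp : 0 < q / p := Nat.div_pos (Nat.le_of_dvd (Nat.pos_of_ne_zero hq) hpq) hp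
  rw [nsmul_eq_mul, ← Nat.cast_mul, ZMod.natCast_eq_zero_iff]
  calc q ∣ c * (q / p) ↔ p * (q / p) ∣ c * (q / p) := by rw [Nat.mul_div_cancel' hpq]
    _ ↔ p ∣ c := Nat.mul_dvd_mul_iff_right hqp

lemma exists_eq_nsmul_natCast_div (hpq : p ∣ q) (hq : q ≠ 0) {a : ZMod q} (ha : p • a = 0) :
    ∃ c : ℕ, a = c • ((q / p : ℕ) : ZMod q) := by
  have : NeZero q := ⟨hq⟩
  have hp : 0 < p := Nat.pos_of_dvd_of_pos hpq (Nat.pos_of_ne_zero hq)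
  have hdvd : p * (q / p) ∣ p * a.val := by
    rw [Nat.mul_div_cancel' hpq, ← ZMod.natCast_eq_zero_iff, Nat.cast_mul, ZMod.natCast_zmod_val,
      ← nsmul_eq_mul, ha]
  obtain ⟨c, hc⟩ := Nat.dvd_of_mul_dvd_mul_left hp hdvd
  refine ⟨c, ?_⟩
  rw [← ZMod.natCast_zmod_val a, hc, nsmul_eq_mul, Nat.cast_mul, mul_comm]

lemma natCast_div_mem_socleOfMultiples (hpq : p ^ (m + 1) ∣ q) :
    ((q / p : ℕ) : ZMod q) ∈ socleOfMultiples p m (ZMod q) := by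
  have hp : p ∣ q := (dvd_pow_self p m.succ_ne_zero).trans hpq
  refine mem_socleOfMultiples.2 ⟨?_, ((q / p ^ (m + 1) : ℕ) : ZMod q), ?_⟩
  · rw [nsmul_eq_mul, ← Nat.cast_mul, Nat.mul_div_cancel' hp, ZMod.natCast_self]
  · rw [nsmul_eq_mul, ← Nat.cast_mul]
    congr 1
    obtain ⟨r, rfl⟩ := hpq
    rcases Nat.eq_zero_or_pos p with rfl | hp
    · rcases m with _ | m <;> simp
    · rw [Nat.mul_div_cancel_left _ (pow_pos hp _), pow_succ', mul_assoc,
        Nat.mul_div_cancel_left _ hp]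

lemma eq_zero_of_mem_socleOfMultiples (hp : p.Prime) (hq : IsPrimePow q)
    (hpq : ¬∃ n, m < n ∧ q = p ^ n) {a : ZMod q} (ha : a ∈ socleOfMultiples p m (ZMod q)) :
    a = 0 := by
  obtain ⟨ha, b, rfl⟩ := mem_socleOfMultiples.1 ha
  obtain ⟨l, j, hl, -, rfl⟩ := hq
  rcases eq_or_ne l p with rfl | hlp
  · have hjm : j ≤ m := by
      by_contra! h
      exact hpq ⟨j, h, rfl⟩
    rw [nsmul_eq_mul, (ZMod.natCast_eq_zero_iff _ _).2 (pow_dvd_pow l hjm), zero_mul]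
  · have hunit : IsUnit (p : ZMod (l ^ j)) := (ZMod.isUnit_iff_coprime p _).2 <|
      ((Nat.coprime_primes hp (Nat.prime_iff.2 hl)).2 hlp.symm).pow_right j
    rwa [nsmul_eq_mul, hunit.mul_right_eq_zero] at ha

end ZMod

section DirectSum

variable {p m : ℕ} {I : Type u} [DecidableEq I] (q : I → ℕ)

lemma pow_succ_dvd_of_exists_eq_pow {q : ℕ} (h : ∃ n, m < n ∧ q = p ^ n) : p ^ (m + 1) ∣ q := by
  obtain ⟨n, hmn, rfl⟩ := h
  exact pow_dvd_pow p hmn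

lemma dvd_and_ne_zero_of_exists_eq_pow (hp : p.Prime) {q : ℕ} (h : ∃ n, m < n ∧ q = p ^ n) :
    p ∣ q ∧ q ≠ 0 := by
  obtain ⟨n, hmn, rfl⟩ := h
  exact ⟨dvd_pow_self p (by omega), pow_ne_zero n hp.ne_zero⟩

variable (p m) in
noncomputable def socleGenerator (t : {i // ∃ n, m < n ∧ q i = p ^ n}) :
    socleOfMultiples p m (⨁ i, ZMod (q i)) :=
  ⟨of (fun i => ZMod (q i)) t.1 ((q t.1 / p : ℕ) : ZMod (q t.1)),
    map_mem_socleOfMultiples _ <|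
      natCast_div_mem_socleOfMultiples (pow_succ_dvd_of_exists_eq_pow t.2)⟩

theorem linearIndependent_socleGenerator (hp : p.Prime) :
    LinearIndependent (ZMod p) (socleGenerator p m q) := by
  have : NeZero p := ⟨hp.ne_zero⟩
  rw [linearIndependent_iff']
  intro s g hg t ht
  have hcoord := congr(($hg : ⨁ i, ZMod (q i)) t.1)
  simp only [AddSubmonoidClass.coe_finsetSum, DirectSum.sum_apply, coe_zmod_smul_socleOfMultiples,
    DirectSum.smul_apply, socleGenerator, ZeroMemClass.coe_zero, DirectSum.zero_apply] at hcoord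
  rw [Finset.sum_eq_single t (fun t' _ ht' => ?_) (absurd ht), DirectSum.of_eq_same] at hcoord
  · obtain ⟨hpq, hq⟩ := dvd_and_ne_zero_of_exists_eq_pow hp t.2
    rw [← ZMod.natCast_zmod_val (g t), ZMod.natCast_eq_zero_iff]
    exact (nsmul_natCast_div_eq_zero_iff hpq hq).1 hcoord
  · rw [DirectSum.of_eq_of_ne _ _ _ fun h => ht' (Subtype.ext h.symm), smul_zero]

lemma of_mem_span_socleGenerator (hp : p.Prime) {i : I} (hq : IsPrimePow (q i)) {a : ZMod (q i)}
    (ha : a ∈ socleOfMultiples p m (ZMod (q i))) :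
    (⟨of _ i a, map_mem_socleOfMultiples _ ha⟩ : socleOfMultiples p m (⨁ i, ZMod (q i))) ∈
      Submodule.span (ZMod p) (Set.range (socleGenerator p m q)) := by
  by_cases hi : ∃ n, m < n ∧ q i = p ^ n
  · obtain ⟨hpq, hq0⟩ := dvd_and_ne_zero_of_exists_eq_pow hp hi
    obtain ⟨c, rfl⟩ := exists_eq_nsmul_natCast_div hpq hq0 (mem_socleOfMultiples.1 ha).1
    have hc : (⟨of _ i (c • ((q i / p : ℕ) : ZMod (q i))), map_mem_socleOfMultiples _ ha⟩ :
        socleOfMultiples p m (⨁ i, ZMod (q i))) = (c : ZMod p) • socleGenerator p m q ⟨i, hi⟩ :=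
      Subtype.ext (by rw [Nat.cast_smul_eq_nsmul, AddSubgroup.coe_nsmul]; exact map_nsmul _ c _)
    rw [hc]
    exact Submodule.smul_mem _ _ (Submodule.subset_span ⟨_, rfl⟩)
  · obtain rfl := eq_zero_of_mem_socleOfMultiples hp hq hi ha
    convert (Submodule.span (ZMod p) (Set.range (socleGenerator p m q))).zero_mem
    simp

theorem rank_socleOfMultiples_directSum_le (hp : p.Prime) (hq : ∀ i, IsPrimePow (q i)) :
    Module.rank (ZMod p) (socleOfMultiples p m (⨁ i, ZMod (q i))) ≤
      Cardinal.mk {i // ∃ n, m < n ∧ q i = p ^ n} := by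
  have : Fact p.Prime := ⟨hp⟩
  have hspan : Submodule.span (ZMod p) (Set.range (socleGenerator p m q)) = ⊤ := by
    refine Submodule.eq_top_iff'.2 fun x => ?_
    have hx i : (x : ⨁ i, ZMod (q i)) i ∈ socleOfMultiples p m (ZMod (q i)) :=
      map_mem_socleOfMultiples (DFinsupp.evalAddMonoidHom i) x.2
    have hsum : x = ∑ i ∈ (x : ⨁ i, ZMod (q i)).support,
        ⟨of _ i ((x : ⨁ i, ZMod (q i)) i), map_mem_socleOfMultiples _ (hx i)⟩ :=
      Subtype.ext (by rw [AddSubmonoidClass.coe_finsetSum]; exact (DirectSum.sum_support_of _).symm)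
    rw [hsum]
    exact Submodule.sum_mem _ fun i _ => of_mem_span_socleGenerator q hp (hq i) (hx i)
  calc Module.rank (ZMod p) (socleOfMultiples p m (⨁ i, ZMod (q i)))
      = Module.rank (ZMod p) (Submodule.span (ZMod p) (Set.range (socleGenerator p m q))) := by
        rw [hspan, rank_top]
    _ ≤ Cardinal.mk (Set.range (socleGenerator p m q)) := rank_span_le _
    _ ≤ Cardinal.mk {i // ∃ n, m < n ∧ q i = p ^ n} := Cardinal.mk_range_le

end DirectSum

theorem subgroup_mbar_le_general
    (G : Type*) [AddCommGroup G] (H : AddSubgroup G)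
    (IG IH : Type) (qG : IG → ℕ) (qH : IH → ℕ)
    (hG : ∀ i, IsPrimePow (qG i))
    (eG : G ≃+ DirectSum IG fun i => ZMod (qG i))
    (eH : H ≃+ DirectSum IH fun i => ZMod (qH i))
    (p k : ℕ) (hp : p.Prime) (hk : 1 ≤ k) :
    Cardinal.mk {i : IH // ∃ n, k ≤ n ∧ qH i = p ^ n} ≤
      Cardinal.mk {i : IG // ∃ n, k ≤ n ∧ qG i = p ^ n} := by
  classical
  have : Fact p.Prime := ⟨hp⟩
  simp only [show ∀ n, k ≤ n ↔ k - 1 < n by omega]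
  let ι : (⨁ i, ZMod (qH i)) →+ ⨁ i, ZMod (qG i) :=
    eG.toAddMonoidHom.comp (H.subtype.comp eH.symm.toAddMonoidHom)
  have hι : Injective ι := eG.injective.comp (H.subtype_injective.comp eH.symm.injective)
  calc Cardinal.mk {i : IH // ∃ n, k - 1 < n ∧ qH i = p ^ n}
      ≤ Module.rank (ZMod p) (socleOfMultiples p (k - 1) (⨁ i, ZMod (qH i))) :=
        (linearIndependent_socleGenerator qH hp).cardinal_le_rank
    _ ≤ Module.rank (ZMod p) (socleOfMultiples p (k - 1) (⨁ i, ZMod (qG i))) :=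
        rank_socleOfMultiples_le_of_injective ι hι
    _ ≤ Cardinal.mk {i : IG // ∃ n, k - 1 < n ∧ qG i = p ^ n} := 
        rank_socleOfMultiples_directSum_le qG hp hG

theorem subgroup_mbar_le
    (G : Type*) [AddCommGroup G] [Countable G] (H : AddSubgroup G)
    (IG IH : Type) (qG : IG → ℕ) (qH : IH → ℕ)
    (hG : ∀ i, IsPrimePow (qG i)) (hH : ∀ i, IsPrimePow (qH i))
    (hbG : ∃ N, ∀ i, qG i ≤ N) (hbH : ∃ N, ∀ i, qH i ≤ N)
    (eG : G ≃+ DirectSum IG fun i => ZMod (qG i))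
    (eH : H ≃+ DirectSum IH fun i => ZMod (qH i))
    (p k : ℕ) (hp : p.Prime) (hk : 1 ≤ k) :
    Cardinal.mk {i : IH // ∃ n, k ≤ n ∧ qH i = p ^ n} ≤
      Cardinal.mk {i : IG // ∃ n, k ≤ n ∧ qG i = p ^ n} :=
  subgroup_mbar_le_general G H IG IH qG qH hG eG eH p k hp hk
end

section
/- An infinite countable abelian torsion group H contains a subgroup of the form ⊕_{i=1}^∞ ⟨h_i⟩ with the orders deg h_i → ∞ if and only if for every pair of positive integers m, n there exists a finitely generated subgroup H⁰ ≤ H admitting a decomposition H⁰ = ⊕_{i=1}^N ⟨h'_i⟩ with more than n of the generators h'_i having order greater than m. -/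
/-!
The forward direction takes `n + 1` consecutive terms far enough out in the sequence.
Conversely, build the sequence greedily. The terms chosen so far generate a finite subgroup `G`,
since `H` is torsion. Apply the hypothesis with `n = |G|`: it gives more than `|G|` pairwise
disjoint cyclic subgroups of large order. Those meeting `G` nontrivially contain distinct nonzero
elements of `G`, so one of them meets `G` trivially, and its generator is the next term. A sequence
each of whose cyclic subgroups is disjoint from the span of the previous ones is independent,
because the lattice of subgroups is modular and compactly generated.
-/

open AddSubgroup Filter Finset Function

theorem exists_seq_of_forall_exists_next {α : Type*} (P : (n : ℕ) → (Fin n → α) → α → Prop)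
    (h : ∀ n v, ∃ y, P n v y) : ∃ f : ℕ → α, ∀ n, P n (fun i => f i) (f n) := by
  choose next hnext using h
  refine ⟨Nat.strongRec fun n prev => next n fun i => prev i i.isLt, fun n => ?_⟩
  beta_reduce
  rw [Nat.strongRec_eq]
  exact hnext _ _

theorem iSupIndep_of_disjoint_iSup_fin {α : Type*} [CompleteLattice α] [IsModularLattice α]
    [IsCompactlyGenerated α] {t : ℕ → α} (h : ∀ n, Disjoint (t n) (⨆ i : Fin n, t i)) :
    iSupIndep t := by
  have hrange : ∀ n, (range n).SupIndep t := by
    intro n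
    induction n with
    | zero => exact supIndep_empty t
    | succ n ih =>
      rw [range_add_one]
      refine ih.insert ((h n).mono_right (Finset.sup_le fun i hi => ?_))
      exact le_iSup_of_le ⟨i, mem_range.1 hi⟩ le_rfl
  refine iSupIndep_iff_supIndep.2 fun s => ?_
  obtain ⟨n, hn⟩ := exists_nat_subset_range s
  exact (hrange n).subset hn

theorem AddSubgroup.iSupIndep_of_disjoint_iSup_fin {H : Type*} [AddCommGroup H]
    {t : ℕ → AddSubgroup H} (h : ∀ n, Disjoint (t n) (⨆ i : Fin n, t i)) : iSupIndep t := by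
  -- `AddSubgroup H` has no `IsCompactlyGenerated` instance, but `Submodule ℤ H` does.
  rw [← iSupIndep_map_orderIso_iff toIntSubmodule]
  refine _root_.iSupIndep_of_disjoint_iSup_fin fun n => ?_
  simpa only [Function.comp_apply, ← OrderIso.map_iSup, disjoint_map_orderIso_iff] using h n

section

variable {H : Type*} [AddCommGroup H]

theorem IsAddTorsion.finite_iSup_zmultiples (htor : IsAddTorsion H) {ι : Type*} [Finite ι]
    (v : ι → H) : Finite (⨆ i, zmultiples (v i) : AddSubgroup H) := by
  have hfg : AddGroup.FG (⨆ i, zmultiples (v i) : AddSubgroup H) := by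
    rw [AddGroup.fg_iff_addSubgroup_fg, fg_iff]
    refine ⟨Set.range v, ?_, Set.finite_range v⟩
    simp only [zmultiples_eq_closure, ← AddSubgroup.closure_iUnion, Set.iUnion_singleton_eq_range]
  exact AddCommGroup.finite_of_fg_isAddTorsion _ (htor.addSubgroup _)

theorem exists_disjoint_of_card_lt {ι : Type*} {K : ι → AddSubgroup H}
    (hK : Pairwise (Disjoint on K)) (G : AddSubgroup H) [Finite G] {s : Finset ι}
    (hs : Nat.card G < #s) : ∃ i ∈ s, Disjoint (K i) G := by
  by_contra! hmeet
  have hx : ∀ i ∈ s, ∃ x : G, (x : H) ∈ K i ∧ x ≠ 0 := fun i hi => by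
    obtain ⟨x, hxK, hxG, hx0⟩ : ∃ x ∈ K i, x ∈ G ∧ x ≠ 0 := by
      simpa [disjoint_def] using hmeet i hi
    exact ⟨⟨x, hxG⟩, hxK, by simpa using hx0⟩
  choose! x hxK hx0 using hx
  have : Fintype G := Fintype.ofFinite G
  have hinj : Set.InjOn x s := fun i hi j hj hij => by
    by_contra hne
    exact hx0 i hi (Subtype.ext (disjoint_def.1 (hK hne) (hxK i hi) (hij ▸ hxK j hj)))
  have := card_le_card_of_injOn x (fun _ _ => mem_coe.2 (mem_univ _)) hinj
  rw [card_univ, ← Nat.card_eq_fintype_card] at this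
  omega

theorem exists_addOrderOf_gt_disjoint_zmultiples
    (hyp : ∀ m n : ℕ, ∃ (N : ℕ) (h' : Fin N → H),
        iSupIndep (fun i => zmultiples (h' i)) ∧
        n < #{i | m < addOrderOf (h' i)})
    (G : AddSubgroup H) [Finite G] (m : ℕ) :
    ∃ h : H, m < addOrderOf h ∧ Disjoint (zmultiples h) G := by
  obtain ⟨N, h', hind, hcard⟩ := hyp m (Nat.card G)
  obtain ⟨i, hi, hdisj⟩ := exists_disjoint_of_card_lt hind.pairwiseDisjoint G hcard
  exact ⟨h' i, (mem_filter.1 hi).2, hdisj⟩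

theorem exists_fin_family_of_tendsto_addOrderOf {h : ℕ → H}
    (hind : iSupIndep fun i => zmultiples (h i))
    (htend : Tendsto (fun i => addOrderOf (h i)) atTop atTop) (m n : ℕ) :
    ∃ (N : ℕ) (h' : Fin N → H),
      iSupIndep (fun i => zmultiples (h' i)) ∧ n < #{i | m < addOrderOf (h' i)} := by
  obtain ⟨K, hK⟩ := eventually_atTop.1 (htend.eventually_gt_atTop m)
  refine ⟨n + 1, fun j => h (K + j), hind.comp fun a b hab => Fin.ext (by simpa using hab), ?_⟩
  have hall : ∀ i : Fin (n + 1), m < addOrderOf (h (K + i)) := fun i => hK _ (Nat.le_add_right K i)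
  simp [hall]

end

theorem torsion_group_unbounded_cyclic_direct_sum_iff_general
    (H : Type*) [AddCommGroup H]
    (htor : AddMonoid.IsTorsion H) :
    (∃ h : ℕ → H,
        iSupIndep (fun i => AddSubgroup.zmultiples (h i)) ∧
        Filter.Tendsto (fun i => addOrderOf (h i)) Filter.atTop Filter.atTop) ↔
    (∀ m n : ℕ, ∃ (N : ℕ) (h' : Fin N → H),
        iSupIndep (fun i => AddSubgroup.zmultiples (h' i)) ∧
        n < (Finset.univ.filter fun i : Fin N => m < addOrderOf (h' i)).card) := by
  refine ⟨fun ⟨h, hind, htend⟩ => exists_fin_family_of_tendsto_addOrderOf hind htend, fun hyp => ?_⟩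
  obtain ⟨f, hf⟩ := exists_seq_of_forall_exists_next
    (fun n (v : Fin n → H) y => n < addOrderOf y ∧ Disjoint (zmultiples y) (⨆ i, zmultiples (v i)))
    fun n v =>
      have := htor.finite_iSup_zmultiples v
      exists_addOrderOf_gt_disjoint_zmultiples hyp _ n
  exact ⟨f, AddSubgroup.iSupIndep_of_disjoint_iSup_fin fun n => (hf n).2,
    tendsto_atTop_mono (fun n => (hf n).1.le) tendsto_id⟩

theorem torsion_group_unbounded_cyclic_direct_sum_iff
    (H : Type*) [AddCommGroup H] [Countable H] [Infinite H]
    (htor : AddMonoid.IsTorsion H) :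
    (∃ h : ℕ → H,
        iSupIndep (fun i => AddSubgroup.zmultiples (h i)) ∧
        Filter.Tendsto (fun i => addOrderOf (h i)) Filter.atTop Filter.atTop) ↔
    (∀ m n : ℕ, ∃ (N : ℕ) (h' : Fin N → H),
        iSupIndep (fun i => AddSubgroup.zmultiples (h' i)) ∧
        n < (Finset.univ.filter fun i : Fin N => m < addOrderOf (h' i)).card) :=
  torsion_group_unbounded_cyclic_direct_sum_iff_general H htor
end

section
/- Let G be a countable abelian group and H a bounded servant (pure) subgroup of G. Then H is a direct summand of G. -/
/-!
Induct on the bound `n`, working with a subgroup `H` pure in a subgroup `A` rather than in the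
whole group. Write `n = p * m` with `p` prime. Then `p • H` is pure in `p • A` and bounded by `m`,
so by induction `p • A = p • H ⊕ K₀`, and purity makes `K₀` disjoint from `H`. Enlarge `K₀` by
Zorn to a subgroup `K ≤ A` maximal among those disjoint from `H`. For `a ∈ A` pick `h ∈ H` with
`p • (a - h) ∈ K₀ ≤ K`; unless `a - h ∈ K`, maximality puts a nonzero element `k + t • (a - h)`
of `H` into `K ⊔ ℤ (a - h)`, and `p ∤ t` because `H` and `K` are disjoint. Since `t` is
invertible modulo `p`, `a - h ∈ H ⊔ K`, so `A = H ⊕ K`.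
-/

open Pointwise

namespace AddSubgroup

section AddGroup

variable {G : Type*} [AddGroup G]

lemma exists_le_maximal_le_disjoint {H K₀ A : AddSubgroup G} (hK₀A : K₀ ≤ A)
    (hHK₀ : Disjoint H K₀) :
    ∃ K, K₀ ≤ K ∧ Maximal (fun K => K ≤ A ∧ Disjoint H K) K := by
  refine zorn_le_nonempty₀ {K | K ≤ A ∧ Disjoint H K} (fun c hc hchain K hK => ?_) K₀ ⟨hK₀A, hHK₀⟩
  refine ⟨sSup c, ⟨sSup_le fun L hL => (hc hL).1, ?_⟩, fun _ => le_sSup⟩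
  rw [disjoint_def]
  intro x hxH hx
  obtain ⟨L, hL, hxL⟩ := (mem_sSup_of_directedOn ⟨K, hK⟩ hchain.directedOn).1 hx
  exact disjoint_def.1 (hc hL).2 hxH hxL

end AddGroup

variable {G : Type*} [AddCommGroup G]

def IsPureIn (H A : AddSubgroup G) : Prop :=
  ∀ (k : ℕ), ∀ a ∈ A, k • a ∈ H → ∃ h ∈ H, k • h = k • a

lemma IsPureIn.smul {H A : AddSubgroup G} (hH : H.IsPureIn A) (p : ℕ) :
    (p • H).IsPureIn (p • A) := by
  intro k y hy hky
  obtain ⟨a, ha, rfl⟩ := (mem_smul_pointwise_iff_exists _ _ _).1 hy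
  obtain ⟨h, hh, hph⟩ := (mem_smul_pointwise_iff_exists _ _ _).1 hky
  obtain ⟨h', hh', hkph'⟩ := hH (k * p) a ha (by rw [mul_smul, ← hph]; exact nsmul_mem hh p)
  exact ⟨p • h', smul_mem_pointwise_smul _ _ _ hh', by rw [smul_smul, hkph', mul_smul]⟩

lemma IsPureIn.disjoint_of_disjoint_smul {H A K : AddSubgroup G} {p : ℕ} (hH : H.IsPureIn A)
    (hK : K ≤ p • A) (hHK : Disjoint (p • H) K) : Disjoint H K := by
  rw [disjoint_def]
  intro x hxH hxK
  obtain ⟨a, ha, rfl⟩ := (mem_smul_pointwise_iff_exists _ _ _).1 (hK hxK)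
  obtain ⟨h, hh, hpha⟩ := hH p a ha hxH
  exact disjoint_def.1 hHK (hpha ▸ smul_mem_pointwise_smul _ _ _ hh) hxK

lemma mem_sup_of_not_disjoint_sup_zmultiples {p : ℕ} (hp : p.Prime) {H K : AddSubgroup G} {z : G}
    (hHK : Disjoint H K) (hpz : p • z ∈ K) (hz : ¬Disjoint H (K ⊔ zmultiples z)) :
    z ∈ H ⊔ K := by
  obtain ⟨x, hxH, hxKz, hx0⟩ : ∃ x ∈ H, x ∈ K ⊔ zmultiples z ∧ x ≠ 0 := by
    simpa [disjoint_def] using hz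
  obtain ⟨k, hk, _, ⟨t, rfl⟩, rfl⟩ := mem_sup.1 hxKz
  have hcop : IsCoprime (p : ℤ) t := by
    refine ((Nat.prime_iff_prime_int.1 hp).irreducible.coprime_iff_not_dvd).2 ?_
    rintro ⟨s, rfl⟩
    have htz : ((p : ℤ) * s) • z ∈ K := by
      rw [mul_comm, mul_zsmul, natCast_zsmul]
      exact zsmul_mem hpz s
    exact hx0 (disjoint_def.1 hHK hxH (add_mem hk htz))
  obtain ⟨u, v, huv⟩ := hcop
  have hz_eq : z = u • (p • z) + v • (k + t • z - k) := by
    rw [add_sub_cancel_left, ← natCast_zsmul, smul_smul, smul_smul, ← add_zsmul, huv, one_zsmul]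
  rw [hz_eq]
  exact add_mem (mem_sup_right (zsmul_mem hpz u))
    (zsmul_mem (sub_mem (mem_sup_left hxH) (mem_sup_right hk)) v)

lemma exists_sup_eq_of_prime {p : ℕ} (hp : p.Prime) {H K₀ A : AddSubgroup G} (hHA : H ≤ A)
    (hK₀A : K₀ ≤ A) (hHK₀ : Disjoint H K₀) (hdiv : ∀ a ∈ A, ∃ h ∈ H, p • a - p • h ∈ K₀) :
    ∃ K ≤ A, Disjoint H K ∧ H ⊔ K = A := by
  obtain ⟨K, hK₀K, hK⟩ := exists_le_maximal_le_disjoint hK₀A hHK₀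
  refine ⟨K, hK.prop.1, hK.prop.2, le_antisymm (sup_le hHA hK.prop.1) fun a ha => ?_⟩
  obtain ⟨h, hh, hpah⟩ := hdiv a ha
  have hpz : p • (a - h) ∈ K := by
    rw [smul_sub]
    exact hK₀K hpah
  have hz : a - h ∈ H ⊔ K := by
    by_cases hd : Disjoint H (K ⊔ zmultiples (a - h))
    · have hle : K ⊔ zmultiples (a - h) ≤ A :=
        sup_le hK.prop.1 (zmultiples_le.2 (sub_mem ha (hHA hh)))
      exact mem_sup_right (hK.le_of_ge ⟨hle, hd⟩ le_sup_left (mem_sup_right (mem_zmultiples _)))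
    · exact mem_sup_of_not_disjoint_sup_zmultiples hp hK.prop.2 hpz hd
  simpa using add_mem hz (mem_sup_left hh)

theorem IsPureIn.exists_sup_eq {n : ℕ} (hn : n ≠ 0) {H A : AddSubgroup G} (hHA : H ≤ A)
    (hH : H.IsPureIn A) (hbound : ∀ h ∈ H, n • h = 0) :
    ∃ K ≤ A, Disjoint H K ∧ H ⊔ K = A := by
  induction n using UniqueFactorizationMonoid.induction_on_prime generalizing H A with
  | h₁ => exact absurd rfl hn
  | h₂ n hunit =>
    obtain rfl : H = ⊥ := eq_bot_iff.2 fun h hh => by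
      simpa [Nat.isUnit_iff.1 hunit] using hbound h hh
    exact ⟨A, le_rfl, disjoint_bot_left, bot_sup_eq A⟩
  | h₃ m p hm hp ih =>
    have hpA : p • A ≤ A := fun _ hx => by
      obtain ⟨a, ha, rfl⟩ := (mem_smul_pointwise_iff_exists _ _ _).1 hx
      exact nsmul_mem ha p
    have hbound' : ∀ y ∈ p • H, m • y = 0 := fun _ hy => by
      obtain ⟨h, hh, rfl⟩ := (mem_smul_pointwise_iff_exists _ _ _).1 hy
      rw [smul_smul, mul_comm, hbound h hh]
    obtain ⟨K₀, hK₀, hdisj, hsup⟩ :=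
      ih (H := p • H) (A := p • A) hm (map_mono hHA) (hH.smul p) hbound'
    refine exists_sup_eq_of_prime (Nat.prime_iff.2 hp) hHA (hK₀.trans hpA)
      (hH.disjoint_of_disjoint_smul hK₀ hdisj) fun a ha => ?_
    obtain ⟨y, hy, k, hk, hyk⟩ := mem_sup.1 (hsup ▸ smul_mem_pointwise_smul a p A ha)
    obtain ⟨h, hh, rfl⟩ := (mem_smul_pointwise_iff_exists _ _ _).1 hy
    exact ⟨h, hh, by rwa [← hyk, add_sub_cancel_left]⟩

end AddSubgroup

theorem bounded_pure_subgroup_is_direct_summand_general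
    (G : Type*) [AddCommGroup G] (H : AddSubgroup G)
    (hbounded : ∃ n : ℕ, 0 < n ∧ ∀ h ∈ H, n • h = 0)
    (hpure : ∀ (n : ℕ) (a : G), a ∈ H → (∃ x : G, n • x = a) → ∃ y ∈ H, n • y = a) :
    ∃ K : AddSubgroup G, IsCompl H K := by
  obtain ⟨n, hn, hbound⟩ := hbounded
  have hH : H.IsPureIn ⊤ := fun k a _ hka => hpure k (k • a) hka ⟨a, rfl⟩
  obtain ⟨K, -, hdisj, hsup⟩ := hH.exists_sup_eq hn.ne' le_top hbound
  exact ⟨K, hdisj, codisjoint_iff.2 hsup⟩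

/-- Prüfer–Kulikov: a bounded pure (servant) subgroup of a countable abelian group
is a direct summand. -/
theorem bounded_pure_subgroup_is_direct_summand
    (G : Type*) [AddCommGroup G] [Countable G] (H : AddSubgroup G)
    (hbounded : ∃ n : ℕ, 0 < n ∧ ∀ h ∈ H, n • h = 0)
    (hpure : ∀ (n : ℕ) (a : G), a ∈ H → (∃ x : G, n • x = a) → ∃ y ∈ H, n • y = a) :
    ∃ K : AddSubgroup G, IsCompl H K :=
  bounded_pure_subgroup_is_direct_summand_general G H hbounded hpure
end

section
/- Let X be the infinite-dimensional torus (ℝ/ℤ)^ℕ and P : X → X the endomorphism P(x₁, x₂, …) = (p x₁, p x₂, …) for a prime p. Then for every x ∈ X, the set of all preimages ⋃_{n∈ℕ} P^{-n}(x) is dense in X. -/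
/-!
In each coordinate the solutions of `p ^ n • c = x i` form a coset of the `p ^ n`-torsion of the
circle, so one of them lies within `p⁻ⁿ` of any prescribed point. Since the product topology only
sees coordinatewise convergence, letting `n → ∞` approximates every point of the torus.
-/

open Filter Topology

theorem AddCircle.dist_coe_le (T r s : ℝ) : dist (r : AddCircle T) s ≤ |r - s| := by
  rw [dist_eq_norm, ← QuotientAddGroup.mk_sub]
  exact QuotientAddGroup.norm_mk_le_norm

theorem AddCircle.exists_nsmul_eq_dist_le {T : ℝ} (hT : 0 < T) {m : ℕ} (hm : m ≠ 0)
    (a b : AddCircle T) : ∃ c : AddCircle T, m • c = a ∧ dist c b ≤ T / m := by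
  obtain ⟨a, rfl⟩ := QuotientAddGroup.mk_surjective a
  obtain ⟨b, rfl⟩ := QuotientAddGroup.mk_surjective b
  have hm' : (0 : ℝ) < m := by positivity
  set k := ⌊(m * b - a) / T⌋
  refine ⟨((a + k * T) / m : ℝ), ?_, ?_⟩
  · rw [← AddCircle.coe_nsmul, nsmul_eq_mul, mul_div_cancel₀ _ hm'.ne', QuotientAddGroup.mk_add,
      add_eq_left, AddCircle.coe_eq_zero_iff]
    exact ⟨k, zsmul_eq_mul _ _⟩
  · have hk₁ : k * T ≤ m * b - a := (le_div_iff₀ hT).1 (Int.floor_le _)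
    have hk₂ : m * b - a < (k + 1) * T := (div_lt_iff₀ hT).1 (Int.lt_floor_add_one _)
    refine (AddCircle.dist_coe_le T _ _).trans ?_
    rw [div_sub' hm'.ne', abs_div, Nat.abs_cast, div_le_div_iff_of_pos_right hm', abs_le]
    constructor <;> linarith

theorem preimages_of_mul_p_dense
    (p : ℕ) (hp : p.Prime) (x : ℕ → AddCircle (1 : ℝ)) :
    Dense {y : ℕ → AddCircle (1 : ℝ) |
      ∃ n : ℕ, (fun z : ℕ → AddCircle (1 : ℝ) => fun i => p • z i)^[n] y = x} := by
  intro z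
  choose y hy_smul hy_dist using fun n i =>
    AddCircle.exists_nsmul_eq_dist_le one_pos (pow_ne_zero n hp.ne_zero) (x i) (z i)
  have h_bound : Tendsto (fun n => (1 : ℝ) / (p ^ n : ℕ)) atTop (𝓝 0) := by
    simpa [Function.comp_def] using tendsto_inv_atTop_zero.comp
      (tendsto_pow_atTop_atTop_of_one_lt (by exact_mod_cast hp.one_lt : (1 : ℝ) < p))
  refine mem_closure_of_tendsto (f := y) (b := atTop) (tendsto_pi_nhds.2 fun i => ?_)
    (Eventually.of_forall fun n => ⟨n, ?_⟩)
  · exact tendsto_iff_dist_tendsto_zero.2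
      (squeeze_zero (fun _ => dist_nonneg) (fun n => hy_dist n i) h_bound)
  · exact (smul_iterate_apply p n (y n)).trans (funext (hy_smul n))
end

section
/- Let X, Y be topological spaces and φ : X → Y a continuous map such that φ(X) is dense in Y and φ maps every nonmeager subset of X to a nonmeager subset of Y, and suppose images of Borel sets under φ are Baire measurable (almost open). Then the preimage under φ of every nonmeager subset of Y is nonmeager in X. -/
/-!
Suppose `φ⁻¹' C` is meagre, so it misses a dense Gδ set `t`, and `φ '' t` misses `C`. For
every nonempty open `U ⊆ Y` the set `t ∩ φ⁻¹' U` is a nonmeagre Borel set, hence its image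
`φ '' t ∩ U` is nonmeagre. A Baire measurable set that is nonmeagre in every nonempty open set
is comeagre, so `φ '' t` is comeagre and `C` is meagre.
-/

open Set Filter

section

variable {X : Type*} [TopologicalSpace X] {s U : Set X}

theorem not_isMeagre_inter_of_mem_residual [BaireSpace X] (hs : s ∈ residual X) (hU : IsOpen U)
    (hne : U.Nonempty) : ¬IsMeagre (s ∩ U) := by
  intro h
  have hsc : IsMeagre sᶜ := by rwa [IsMeagre, compl_compl]
  refine not_isMeagre_of_isOpen hU hne ((h.union hsc).mono fun x hx => ?_)
  by_cases hxs : x ∈ s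
  · exact Or.inl ⟨hxs, hx⟩
  · exact Or.inr hxs

theorem BaireMeasurableSet.mem_residual_of_forall_not_isMeagre_inter (hs : BaireMeasurableSet s)
    (h : ∀ U, IsOpen U → U.Nonempty → ¬IsMeagre (s ∩ U)) : s ∈ residual X := by
  obtain ⟨u, hu, hsu⟩ := hs.residualEq_isOpen
  have hud : Dense u := by
    refine dense_iff_inter_open.2 fun U hU hne => not_not.1 fun hUu => h U hU hne ?_
    show (s ∩ U)ᶜ ∈ residual X
    filter_upwards [hsu.mem_iff] with x hx ⟨hxs, hxU⟩
    exact hUu ⟨x, hxU, hx.1 hxs⟩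
  filter_upwards [residual_of_dense_open hu hud, hsu.mem_iff] with x hxu hx using hx.2 hxu

end

theorem preimage_nonmeager_of_image_nonmeager_general
    (X Y : Type*) [TopologicalSpace X] [TopologicalSpace Y]
    [PolishSpace X] [MeasurableSpace X] [BorelSpace X]
    (φ : X → Y) (hc : Continuous φ) (hd : DenseRange φ)
    (himg : ∀ A : Set X, ¬ IsMeagre A → ¬ IsMeagre (φ '' A))
    (hBaire : ∀ B : Set X, MeasurableSet B → BaireMeasurableSet (φ '' B)) :
    ∀ C : Set Y, ¬ IsMeagre C → ¬ IsMeagre (φ ⁻¹' C) := by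
  intro C hC hpre
  obtain ⟨t, htC, htGδ, htd⟩ := mem_residual.1 hpre
  have ht : t ∈ residual X := residual_of_dense_Gδ htGδ htd
  have himage : φ '' t ∈ residual Y :=
    (hBaire t htGδ.measurableSet).mem_residual_of_forall_not_isMeagre_inter fun U hU hne => by
      rw [← image_inter_preimage]
      obtain ⟨x, hx⟩ := hd.exists_mem_open hU hne
      exact himg _ (not_isMeagre_inter_of_mem_residual ht (hU.preimage hc) ⟨x, hx⟩)
  refine hC (mem_of_superset himage ?_)
  rintro _ ⟨x, hxt, rfl⟩
  exact htC hxt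

theorem preimage_nonmeager_of_image_nonmeager
    (X Y : Type*) [TopologicalSpace X] [TopologicalSpace Y]
    [PolishSpace X] [PolishSpace Y] [MeasurableSpace X] [BorelSpace X]
    (φ : X → Y) (hc : Continuous φ) (hd : DenseRange φ)
    (himg : ∀ A : Set X, ¬ IsMeagre A → ¬ IsMeagre (φ '' A))
    (hBaire : ∀ B : Set X, MeasurableSet B → BaireMeasurableSet (φ '' B)) :
    ∀ C : Set Y, ¬ IsMeagre C → ¬ IsMeagre (φ ⁻¹' C) :=
  preimage_nonmeager_of_image_nonmeager_general X Y φ hc hd himg hBaire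
end
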